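/- arXiv:cs/0610093 — 7 statements merged into one kernel-verified Lean document; each statement's English description precedes it below -/
import Mathlib

section
/- For all epistemic states (M,s), all updates (U,e) and (U',e'), and every formula φ of the language L: (M,s) ⊨ [U,e][U',e']φ if and only if (M,s) ⊨ [(U,e);(U',e')]φ. Hence the axiom [U,e][U',e']φ ↔ [(U,e);(U',e')]φ is valid. -/
/-- Formulas of the language `L` of epistemic logic with updates (events of
epistemic and/or ontic change).  The constructor `upd` inlines an update
`(U,e)`: an event type `E`, accessibility relations on events, preconditions,
postconditions, and the actual event `e`.  `⊤` and `⊥` are included as the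
usual primitives. -/
inductive Form (A P : Type) : Type 1 where
  | atom : P → Form A P
  | top : Form A P
  | bot : Form A P
  | neg : Form A P → Form A P
  | and : Form A P → Form A P → Form A P
  | box : A → Form A P → Form A P
  | cbox : Set A → Form A P → Form A P
  | upd : (E : Type) → (A → E → E → Prop) → (E → Form A P) → (E → P → Form A P) →
      E → Form A P → Form A P

/-- An update model `U = (E, rel, pre, post)`. -/
structure Upd (A P : Type) : Type 1 where
  E : Type
  rel : A → E → E → Prop
  pre : E → Form A P
  post : E → P → Form A P

/-- An epistemic model `M = (S, R, V)`. -/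
structure Model (A P : Type) : Type 1 where
  S : Type
  R : A → S → S → Prop
  V : P → S → Prop

/-- The formula `[U,e]φ`. -/
def Form.updF {A P : Type} (U : Upd A P) (e : U.E) (φ : Form A P) : Form A P :=
  Form.upd U.E U.rel U.pre U.post e φ

/-- The product construction, parameterised by the satisfaction relations of the
preconditions and postconditions of the events. -/
def prodM {A P : Type} (M : Model A P) (E : Type) (rel : A → E → E → Prop)
    (preS : E → M.S → Prop) (postS : E → M.S → P → Prop) : Model A P where
  S := { x : M.S × E // preS x.2 x.1 }
  R a x y := M.R a x.1.1 y.1.1 ∧ rel a x.1.2 y.1.2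
  V p x := postS x.1.2 x.1.1 p

/-- Satisfaction: `sat φ M s` is `(M,s) ⊨ φ`. -/
def sat {A P : Type} : Form A P → (M : Model A P) → M.S → Prop
  | .atom p, M, s => M.V p s
  | .top, _, _ => True
  | .bot, _, _ => False
  | .neg φ, M, s => ¬ sat φ M s
  | .and φ ψ, M, s => sat φ M s ∧ sat ψ M s
  | .box a φ, M, s => ∀ t, M.R a s t → sat φ M t
  | .cbox B φ, M, s =>
      ∀ t, Relation.ReflTransGen (fun x y => ∃ a ∈ B, M.R a x y) s t → sat φ M t
  | .upd E rel pre post e φ, M, s =>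
      ∀ h : sat (pre e) M s,
        sat φ (prodM M E rel (fun f t => sat (pre f) M t) (fun f t p => sat (post f p) M t))
          ⟨(s, e), h⟩

/-- The product update `M ⊗ U`; its domain is `{(t,f) | (M,t) ⊨ pre(f)}`. -/
def Model.prodUpd {A P : Type} (M : Model A P) (U : Upd A P) : Model A P :=
  prodM M U.E U.rel (fun f t => sat (U.pre f) M t) (fun f t p => sat (U.post f p) M t)

/-- Well-formedness of a formula: all event sets of update models occurring in it are
finite and nonempty, and all postconditions differ from the identity `p ↦ p` on only
finitely many atoms (this finite set being the domain `dom(post(e))`). -/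
def Form.WF {A P : Type} : Form A P → Prop
  | .atom _ => True
  | .top => True
  | .bot => True
  | .neg φ => φ.WF
  | .and φ ψ => φ.WF ∧ ψ.WF
  | .box _ φ => φ.WF
  | .cbox _ φ => φ.WF
  | .upd E _ pre post _ φ =>
      Nonempty E ∧ Finite E ∧ (∀ f, (pre f).WF) ∧ (∀ f p, (post f p).WF) ∧
      (∀ f, {p | post f p ≠ Form.atom p}.Finite) ∧ φ.WF

/-- Well-formedness of an update model: the event set is finite and nonempty, the
preconditions and postconditions are well-formed formulas, and each postcondition
differs from the identity on only finitely many atoms, the set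
`{p | post e p ≠ atom p}` being the domain `dom(post(e))`. -/
def Upd.WF {A P : Type} (U : Upd A P) : Prop :=
  Nonempty U.E ∧ Finite U.E ∧ (∀ f, (U.pre f).WF) ∧ (∀ f p, (U.post f p).WF) ∧
  (∀ f, {p | U.post f p ≠ Form.atom p}.Finite)

/-- Disjunction, as the usual abbreviation. -/
def Form.or {A P : Type} (φ ψ : Form A P) : Form A P := (φ.neg.and ψ.neg).neg

/-- Implication, as the usual abbreviation. -/
def Form.imp {A P : Type} (φ ψ : Form A P) : Form A P := (φ.and ψ.neg).neg

/-- Bi-implication, as the usual abbreviation. -/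
def Form.biImp {A P : Type} (φ ψ : Form A P) : Form A P := (φ.imp ψ).and (ψ.imp φ)

/-- Finite conjunction of a list of formulas. -/
def bigAnd {A P : Type} (l : List (Form A P)) : Form A P := l.foldr Form.and Form.top

/-- Finite disjunction of a list of formulas. -/
def bigOr {A P : Type} (l : List (Form A P)) : Form A P := l.foldr Form.or Form.bot

open Classical in
/-- Composition `(U,e) ; (U',e')` of update models: the underlying update model has
events `E × E'`, `pre''(f,f') = pre(f) ∧ [U,f]pre'(f')`, and for `p ∈ dom(post''(f,f'))
= dom(post(f)) ∪ dom(post'(f'))`: `post''(f,f')(p) = post(f)(p)` if `p ∉ dom(post'(f'))`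
and `[U,f]post'(f')(p)` otherwise; the point is the pair `(e,e')`. -/
noncomputable def Upd.comp {A P : Type} (U U' : Upd A P) : Upd A P where
  E := U.E × U'.E
  rel a x y := U.rel a x.1 y.1 ∧ U'.rel a x.2 y.2
  pre x := (U.pre x.1).and (Form.updF U x.1 (U'.pre x.2))
  post x p :=
    if U'.post x.2 p = Form.atom p then U.post x.1 p
    else Form.updF U x.1 (U'.post x.2 p)


/-!
Both sides evaluate `φ` at the same pointed model up to isomorphism: a state
`((t, f), f')` of `(M ⊗ U) ⊗ U'` is a state `(t, (f, f'))` of `M ⊗ (U ; U')`, because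
`pre(f) ∧ [U,f]pre'(f')` holds at `t` exactly when `(t, f)` survives the first update and
`(t, f)` satisfies `pre'(f')` in `M ⊗ U`; likewise for the postconditions. Satisfaction is
invariant under isomorphism by induction on formulas, the update case using that an
isomorphism of models lifts to their products with the same update model.
-/

structure Model.Iso {A P : Type} (M N : Model A P) where
  toEquiv : M.S ≃ N.S
  rel_iff : ∀ a s t, M.R a s t ↔ N.R a (toEquiv s) (toEquiv t)
  val_iff : ∀ p s, M.V p s ↔ N.V p (toEquiv s)

namespace Model.Iso

variable {A P : Type} {M N : Model A P}

theorem reflTransGen_iff (i : M.Iso N) (B : Set A) (s t : M.S) :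
    Relation.ReflTransGen (fun x y => ∃ a ∈ B, M.R a x y) s t ↔
      Relation.ReflTransGen (fun x y => ∃ a ∈ B, N.R a x y) (i.toEquiv s) (i.toEquiv t) := by
  constructor
  · exact Relation.ReflTransGen.lift i.toEquiv
      (fun x y ⟨a, ha, hr⟩ => ⟨a, ha, (i.rel_iff a x y).mp hr⟩) s t
  · intro h
    simpa [Function.onFun] using
      Relation.ReflTransGen.lift (p := fun x y => ∃ a ∈ B, M.R a x y) i.toEquiv.symm
        (fun x y ⟨a, ha, hr⟩ => ⟨a, ha, (i.rel_iff a _ _).mpr (by simpa using hr)⟩) _ _ h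

def prodM (i : M.Iso N) (E : Type) (rel : A → E → E → Prop)
    {preM : E → M.S → Prop} {preN : E → N.S → Prop}
    {postM : E → M.S → P → Prop} {postN : E → N.S → P → Prop}
    (hpre : ∀ f s, preM f s ↔ preN f (i.toEquiv s))
    (hpost : ∀ f s p, postM f s p ↔ postN f (i.toEquiv s) p) :
    (_root_.prodM M E rel preM postM).Iso (_root_.prodM N E rel preN postN) where
  toEquiv := (i.toEquiv.prodCongr (Equiv.refl E)).subtypeEquiv fun x => hpre x.2 x.1
  rel_iff a x y := and_congr_left' (i.rel_iff a x.1.1 y.1.1)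
  val_iff p x := hpost x.1.2 x.1.1 p

end Model.Iso

theorem sat_iff_of_iso {A P : Type} (φ : Form A P) :
    ∀ {M N : Model A P} (i : M.Iso N) (s : M.S), sat φ M s ↔ sat φ N (i.toEquiv s) := by
  induction φ with
  | atom p => exact fun i s => i.val_iff p s
  | top | bot => exact fun _ _ => Iff.rfl
  | neg φ ih => exact fun i s => not_congr (ih i s)
  | and φ ψ ihφ ihψ => exact fun i s => and_congr (ihφ i s) (ihψ i s)
  | box a φ ih =>
      intro M N i s
      refine i.toEquiv.forall_congr fun {t} => ?_
      exact imp_congr (i.rel_iff a s t) (ih i t)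
  | cbox B φ ih =>
      intro M N i s
      refine i.toEquiv.forall_congr fun {t} => ?_
      exact imp_congr (i.reflTransGen_iff B s t) (ih i t)
  | upd E rel pre post e φ ihpre ihpost ihφ =>
      intro M N i s
      let j := i.prodM (postN := fun f t p => sat (post f p) N t) E rel
        (fun f => ihpre f i) (fun f t p => ihpost f p i t)
      constructor
      · intro H h'
        exact (ihφ j ⟨(s, e), (ihpre e i s).mpr h'⟩).mp (H _)
      · intro H h
        exact (ihφ j ⟨(s, e), h⟩).mpr (H _)

section comp

variable {A P : Type} (M : Model A P) (U U' : Upd A P)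

theorem sat_comp_pre (t : M.S) (f : U.E) (f' : U'.E) :
    sat ((U.comp U').pre (f, f')) M t ↔
      ∃ h : sat (U.pre f) M t, sat (U'.pre f') (M.prodUpd U) ⟨(t, f), h⟩ :=
  ⟨fun ⟨h, h'⟩ => ⟨h, h' h⟩, fun ⟨h, h'⟩ => ⟨h, fun _ => h'⟩⟩

theorem sat_comp_post (t : M.S) (f : U.E) (f' : U'.E) (p : P) (h : sat (U.pre f) M t) :
    sat ((U.comp U').post (f, f') p) M t ↔
      sat (U'.post f' p) (M.prodUpd U) ⟨(t, f), h⟩ := by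
  by_cases hp : U'.post f' p = Form.atom p
  · simp only [Upd.comp, hp, if_true]
    exact Iff.rfl
  · simp only [Upd.comp, if_neg hp]
    exact ⟨fun H => H h, fun H _ => H⟩

def Model.prodUpdCompIso : ((M.prodUpd U).prodUpd U').Iso (M.prodUpd (U.comp U')) where
  toEquiv :=
    { toFun := fun x => ⟨(x.1.1.1.1, (x.1.1.1.2, x.1.2)),
        (sat_comp_pre M U U' _ _ _).mpr ⟨x.1.1.2, x.2⟩⟩
      invFun := fun y =>
        let h := (sat_comp_pre M U U' _ _ _).mp y.2
        ⟨(⟨(y.1.1, y.1.2.1), h.1⟩, y.1.2.2), h.2⟩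
      left_inv := fun _ => rfl
      right_inv := fun _ => rfl }
  rel_iff _ _ _ := and_assoc
  val_iff p x := (sat_comp_post M U U' _ _ _ p x.1.1.2).symm

end comp

theorem update_composition_valid_general {A P : Type}
    (M : Model A P) (s : M.S)
    (U U' : Upd A P) (e : U.E) (e' : U'.E)
    (φ : Form A P) :
    sat (Form.updF U e (Form.updF U' e' φ)) M s ↔
      sat (Form.updF (U.comp U') (e, e') φ) M s := by
  let i := M.prodUpdCompIso U U'
  constructor
  · intro H h
    obtain ⟨h₁, h₂⟩ := (sat_comp_pre M U U' s e e').mp h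
    exact (sat_iff_of_iso φ i ⟨(⟨(s, e), h₁⟩, e'), h₂⟩).mp (H h₁ h₂)
  · intro H h₁ h₂
    exact (sat_iff_of_iso φ i ⟨(⟨(s, e), h₁⟩, e'), h₂⟩).mpr (H _)

/-- For all epistemic states `(M,s)`, all updates `(U,e)` and `(U',e')`,
and every formula `φ` of the language `L`:
`(M,s) ⊨ [U,e][U',e']φ` if and only if `(M,s) ⊨ [(U,e);(U',e')]φ`.
Hence the axiom `[U,e][U',e']φ ↔ [(U,e);(U',e')]φ` is valid. -/
theorem update_composition_valid {A P : Type} [Finite A] [Countable P]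
    (M : Model A P) (hMne : Nonempty M.S) (s : M.S)
    (U U' : Upd A P) (hU : U.WF) (hU' : U'.WF) (e : U.E) (e' : U'.E)
    (φ : Form A P) (hφ : φ.WF) :
    sat (Form.updF U e (Form.updF U' e' φ)) M s ↔
      sat (Form.updF (U.comp U') (e, e') φ) M s :=
  update_composition_valid_general M s U U' e e' φ
end

section
/- For every epistemic model M and all update models U and U' with composition U;U' (the update model underlying (U,e);(U',e'), which does not depend on the points), the map (t,(f,f')) ↦ ((t,f),f') is an isomorphism of epistemic models from M ⊗ (U;U') onto (M ⊗ U) ⊗ U': it is a bijection between the domains, it preserves and reflects each accessibility relation R(a), and it preserves and reflects the valuation of every atom p ∈ P. -/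
section

variable {A P : Type}

theorem sat_pre_comp_iff (U U' : Upd A P) (M : Model A P) (t : M.S) (f : U.E) (f' : U'.E) :
    sat ((U.comp U').pre (f, f')) M t ↔
      ∃ h : sat (U.pre f) M t, sat (U'.pre f') (M.prodUpd U) ⟨(t, f), h⟩ :=
  ⟨fun ⟨h, h'⟩ => ⟨h, h' h⟩, fun ⟨h, h'⟩ => ⟨h, fun _ => h'⟩⟩

theorem sat_post_comp_iff (U U' : Upd A P) (M : Model A P) (t : M.S) (f : U.E) (f' : U'.E)
    (h : sat (U.pre f) M t) (p : P) :
    sat ((U.comp U').post (f, f') p) M t ↔ sat (U'.post f' p) (M.prodUpd U) ⟨(t, f), h⟩ := by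
  simp only [Upd.comp]
  split_ifs with hid
  · -- `p ∉ dom(post'(f'))`: the atom `p` at `(t,f)` is `post(f)(p)` at `t`
    rw [hid]
    rfl
  · exact ⟨fun h' => h' h, fun h' _ => h'⟩

def Model.prodUpdCompEquiv (M : Model A P) (U U' : Upd A P) :
    (M.prodUpd (U.comp U')).S ≃ ((M.prodUpd U).prodUpd U').S where
  toFun x :=
    let h := (sat_pre_comp_iff U U' M _ _ _).1 x.2
    ⟨(⟨(x.1.1, x.1.2.1), h.1⟩, x.1.2.2), h.2⟩
  invFun y := ⟨(y.1.1.1.1, (y.1.1.1.2, y.1.2)), (sat_pre_comp_iff U U' M _ _ _).2 ⟨y.1.1.2, y.2⟩⟩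
  left_inv _ := rfl
  right_inv _ := rfl

theorem Model.prodUpdCompEquiv_rel_iff (M : Model A P) (U U' : Upd A P) (a : A)
    (x y : (M.prodUpd (U.comp U')).S) :
    (M.prodUpd (U.comp U')).R a x y ↔
      ((M.prodUpd U).prodUpd U').R a (M.prodUpdCompEquiv U U' x) (M.prodUpdCompEquiv U U' y) :=
  and_assoc.symm

theorem Model.prodUpdCompEquiv_val_iff (M : Model A P) (U U' : Upd A P) (p : P)
    (x : (M.prodUpd (U.comp U')).S) :
    (M.prodUpd (U.comp U')).V p x ↔
      ((M.prodUpd U).prodUpd U').V p (M.prodUpdCompEquiv U U' x) :=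
  sat_post_comp_iff U U' M _ _ _ _ p

end

theorem product_of_composition_isomorphic_general {A P : Type}
    (M : Model A P)
    (U U' : Upd A P) :
    ∃ h : (M.prodUpd (U.comp U')).S → ((M.prodUpd U).prodUpd U').S,
      (∀ x, (h x).1.1.1.1 = x.1.1 ∧ (h x).1.1.1.2 = x.1.2.1 ∧ (h x).1.2 = x.1.2.2) ∧
      Function.Bijective h ∧
      (∀ a x y, (M.prodUpd (U.comp U')).R a x y ↔
        ((M.prodUpd U).prodUpd U').R a (h x) (h y)) ∧
      (∀ p x, (M.prodUpd (U.comp U')).V p x ↔ ((M.prodUpd U).prodUpd U').V p (h x)) :=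
  ⟨M.prodUpdCompEquiv U U', fun _ => ⟨rfl, rfl, rfl⟩, (M.prodUpdCompEquiv U U').bijective,
    M.prodUpdCompEquiv_rel_iff U U', M.prodUpdCompEquiv_val_iff U U'⟩

/-- For every epistemic model `M` and all update models `U` and `U'` with
composition `U;U'`, the map `(t,(f,f')) ↦ ((t,f),f')` is an isomorphism of epistemic
models from `M ⊗ (U;U')` onto `(M ⊗ U) ⊗ U'`: a bijection between the domains that
preserves and reflects each accessibility relation and the valuation of every atom. -/
theorem product_of_composition_isomorphic {A P : Type} [Finite A] [Countable P]
    (M : Model A P) (hMne : Nonempty M.S)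
    (U U' : Upd A P) (hU : U.WF) (hU' : U'.WF) :
    ∃ h : (M.prodUpd (U.comp U')).S → ((M.prodUpd U).prodUpd U').S,
      (∀ x, (h x).1.1.1.1 = x.1.1 ∧ (h x).1.1.1.2 = x.1.2.1 ∧ (h x).1.2 = x.1.2.2) ∧
      Function.Bijective h ∧
      (∀ a x y, (M.prodUpd (U.comp U')).R a x y ↔
        ((M.prodUpd U).prodUpd U').R a (h x) (h y)) ∧
      (∀ p x, (M.prodUpd (U.comp U')).V p x ↔ ((M.prodUpd U).prodUpd U').V p (h x)) :=
  product_of_composition_isomorphic_general M U U'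
end

section
/- Let (M,s) be a finite epistemic state and let φ ∈ L be a formula that is satisfied in some finite epistemic state (M',s') over the same agents and atoms. Suppose only finitely many atoms are relevant in M or in M', suppose there is a set S^ser ⊆ S with s ∈ S^ser that is serial for every agent a whose relation in M' is nonempty, and suppose each (M,u) for u ∈ S^ser has a characteristic formula. Then there is an update (U,e) realizing φ at (M,s), i.e., (M,s) ⊨ ⟨U,e⟩φ, where ⟨U,e⟩φ abbreviates ¬[U,e]¬φ. -/
/-- `Z` is a bisimulation between the models `M` and `M'`. -/
def Bisim {A P : Type} (M M' : Model A P) (Z : M.S → M'.S → Prop) : Prop :=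
  (∃ s s', Z s s') ∧
  ∀ s s', Z s s' →
    (∀ p, M.V p s ↔ M'.V p s') ∧
    (∀ a t, M.R a s t → ∃ t', M'.R a s' t' ∧ Z t t') ∧
    (∀ a t', M'.R a s' t' → ∃ t, M.R a s t ∧ Z t t')

/-- `(M,s) ↔ (M',s')` : some bisimulation links `s` and `s'`. -/
def Bisimilar {A P : Type} (M M' : Model A P) (s : M.S) (s' : M'.S) : Prop :=
  ∃ Z, Bisim M M' Z ∧ Z s s'

/-- An atom is relevant in a model iff its valuation is neither empty nor the
whole domain. -/
def Relevant {A P : Type} (M : Model A P) (p : P) : Prop :=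
  (∃ s, M.V p s) ∧ (∃ s, ¬ M.V p s)

/-- `S0` is serial for agent `a` in `M`. -/
def SerialOn {A P : Type} (M : Model A P) (S0 : Set M.S) (a : A) : Prop :=
  ∀ t ∈ S0, ∃ u ∈ S0, M.R a t u

/-- `δ` is a characteristic formula of the epistemic state `(M,u)`: an epistemic
state satisfies `δ` iff it is bisimilar to `(M,u)`. -/
def CharFml {A P : Type} (M : Model A P) (u : M.S) (δ : Form A P) : Prop :=
  ∀ N : Model A P, Nonempty N.S → ∀ t : N.S, (sat δ N t ↔ Bisimilar N M t u)

open Classical in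
/-- The update model for arbitrary change with precondition formula `d` at every
event: events are the states of `M'` with the accessibility relations of `M'`, and
for every atom `p` relevant in `M` or in `M'` the postcondition at event `t'` is `⊤`
if `t' ∈ V'(p)` and `⊥` otherwise (the identity on all other atoms). -/
noncomputable def arbChangeP {A P : Type} (M M' : Model A P) (d : Form A P) : Upd A P where
  E := M'.S
  rel := M'.R
  pre _ := d
  post t' p :=
    if Relevant M p ∨ Relevant M' p then (if M'.V p t' then Form.top else Form.bot)
    else Form.atom p

/-- The update model for arbitrary change whose preconditions are the disjunction
of the formulas in `ds` (the characteristic formulas `δ_(M,u)` for `u ∈ S^ser`). -/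
noncomputable def arbChange {A P : Type} (M M' : Model A P) (ds : List (Form A P)) : Upd A P :=
  arbChangeP M M' (bigOr ds)

/-!
Take as update model a copy of `M'` whose events all have as precondition the disjunction `δ`
of the characteristic formulas of the states in `S^ser`, and whose postconditions set every
atom occurring in `φ` to its value in `M'`. The states of `M` satisfying `δ` are those bisimilar
to a state of `S^ser`, so they again form a set serial for the agents acting in `M'`. Hence in
`M ⊗ U` the projection `(t, t') ↦ t'` is a bisimulation onto `M'` as far as the atoms of `φ` are
concerned, and `φ` transfers from `(M', s')` to `(M ⊗ U, (s, s'))`.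

Resetting only the atoms relevant in `M` or `M'`, as `arbChange` does, would not suffice: an atom
true throughout `M` and false throughout `M'` is relevant in neither.
-/

variable {A P : Type}

namespace Form

/-- `Δ` contains every atom on whose valuation the truth of the formula can depend. -/
def Supports (Δ : Set P) : Form A P → Prop
  | .atom p => p ∈ Δ
  | .top => True
  | .bot => True
  | .neg φ => Supports Δ φ
  | .and φ ψ => Supports Δ φ ∧ Supports Δ ψ
  | .box _ φ => Supports Δ φ
  | .cbox _ φ => Supports Δ φ
  | .upd E _ pre post _ ψ =>
      (∀ f, Supports Δ (pre f)) ∧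
      (∀ (f : E) (p : P), post f p = Form.atom p ∨ Supports Δ (post f p)) ∧
      Supports Δ ψ

theorem Supports.mono {Δ Δ' : Set P} (h : Δ ⊆ Δ') {φ : Form A P} (hφ : Supports Δ φ) :
    Supports Δ' φ := by
  induction φ with
  | atom => exact h hφ
  | top | bot => trivial
  | neg _ ih | box _ _ ih | cbox _ _ ih => exact ih hφ
  | and _ _ ih₁ ih₂ => exact ⟨ih₁ hφ.1, ih₂ hφ.2⟩
  | upd _ _ _ _ _ _ ihpre ihpost ihψ =>
    obtain ⟨hpre, hpost, hψ⟩ := hφ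
    exact ⟨fun f => ihpre f (hpre f), fun f p => (hpost f p).imp_right (ihpost f p), ihψ hψ⟩

theorem WF.exists_finite_supports {φ : Form A P} (hφ : φ.WF) :
    ∃ Δ : Set P, Δ.Finite ∧ Supports Δ φ := by
  induction φ with
  | atom p => exact ⟨{p}, Set.finite_singleton p, rfl⟩
  | top | bot => exact ⟨∅, Set.finite_empty, trivial⟩
  | neg _ ih | box _ _ ih | cbox _ _ ih => exact ih hφ
  | and _ _ ih₁ ih₂ =>
    obtain ⟨Δ₁, hfin₁, hsup₁⟩ := ih₁ hφ.1
    obtain ⟨Δ₂, hfin₂, hsup₂⟩ := ih₂ hφ.2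
    exact ⟨Δ₁ ∪ Δ₂, hfin₁.union hfin₂,
      hsup₁.mono Set.subset_union_left, hsup₂.mono Set.subset_union_right⟩
  | upd E _ pre post _ _ ihpre ihpost ihψ =>
    obtain ⟨_, hfinE, hpre, hpost, hdom, hψ⟩ := hφ
    have : Finite E := hfinE
    choose Δpre hfinpre hsuppre using fun f => ihpre f (hpre f)
    choose Δpost hfinpost hsuppost using fun f p => ihpost f p (hpost f p)
    obtain ⟨Δψ, hfinψ, hsupψ⟩ := ihψ hψ
    -- only the finitely many atoms in `dom(post f)` contribute their postcondition's support
    refine ⟨(⋃ f, Δpre f) ∪ (⋃ f, ⋃ p ∈ {p | post f p ≠ Form.atom p}, Δpost f p) ∪ Δψ,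
      ((Set.finite_iUnion hfinpre).union
        (Set.finite_iUnion fun f => (hdom f).biUnion fun p _ => hfinpost f p)).union hfinψ,
      fun f => (hsuppre f).mono fun x hx => .inl (.inl (Set.mem_iUnion.mpr ⟨f, hx⟩)),
      fun f p => ?_, hsupψ.mono Set.subset_union_right⟩
    refine (em (post f p = Form.atom p)).imp_right fun hp => (hsuppost f p).mono fun x hx => ?_
    exact .inl (.inr (Set.mem_iUnion.mpr ⟨f, Set.mem_biUnion hp hx⟩))

end Form

structure IsBisimOn (Δ : Set P) (N N' : Model A P) (Z : N.S → N'.S → Prop) : Prop where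
  atoms : ∀ {n n'}, Z n n' → ∀ p ∈ Δ, (N.V p n ↔ N'.V p n')
  forth : ∀ {n n'}, Z n n' → ∀ a t, N.R a n t → ∃ t', N'.R a n' t' ∧ Z t t'
  back : ∀ {n n'}, Z n n' → ∀ a t', N'.R a n' t' → ∃ t, N.R a n t ∧ Z t t'

namespace IsBisimOn

variable {Δ : Set P} {N N' : Model A P} {Z : N.S → N'.S → Prop}

theorem symm (hZ : IsBisimOn Δ N N' Z) : IsBisimOn Δ N' N (flip Z) where
  atoms h p hp := (hZ.atoms h p hp).symm
  forth h := hZ.back h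
  back h := hZ.forth h

theorem reflTransGen_forth (hZ : IsBisimOn Δ N N' Z) (B : Set A) {n t : N.S}
    (hnt : Relation.ReflTransGen (fun x y => ∃ a ∈ B, N.R a x y) n t) {n' : N'.S} (hn : Z n n') :
    ∃ t', Relation.ReflTransGen (fun x y => ∃ a ∈ B, N'.R a x y) n' t' ∧ Z t t' := by
  induction hnt with
  | refl => exact ⟨n', .refl, hn⟩
  | tail _ hstep ih =>
    obtain ⟨u', hu', hZu⟩ := ih
    obtain ⟨a, ha, hR⟩ := hstep
    obtain ⟨t', hR', hZt⟩ := hZ.forth hZu a _ hR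
    exact ⟨t', hu'.tail ⟨a, ha, hR'⟩, hZt⟩

theorem prodM (hZ : IsBisimOn Δ N N' Z) (E : Type) (rel : A → E → E → Prop)
    {preS : E → N.S → Prop} {preS' : E → N'.S → Prop}
    {postS : E → N.S → P → Prop} {postS' : E → N'.S → P → Prop}
    (hpre : ∀ f {n n'}, Z n n' → (preS f n ↔ preS' f n'))
    (hpost : ∀ f {n n'}, Z n n' → ∀ p ∈ Δ, (postS f n p ↔ postS' f n' p)) :
    IsBisimOn Δ (prodM N E rel preS postS) (prodM N' E rel preS' postS')
      (fun x x' => x.1.2 = x'.1.2 ∧ Z x.1.1 x'.1.1) where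
  atoms := by
    rintro ⟨⟨n, f⟩, _⟩ ⟨⟨n', _⟩, _⟩ ⟨rfl, hn⟩
    exact hpost f hn
  forth := by
    rintro ⟨⟨n, f⟩, _⟩ ⟨⟨n', _⟩, _⟩ ⟨rfl, hn⟩ a ⟨⟨t, g⟩, ht⟩ ⟨hR, hrel⟩
    obtain ⟨t', hR', hZt⟩ := hZ.forth hn a t hR
    exact ⟨⟨(t', g), (hpre g hZt).mp ht⟩, ⟨hR', hrel⟩, rfl, hZt⟩
  back := by
    rintro ⟨⟨n, f⟩, _⟩ ⟨⟨n', _⟩, _⟩ ⟨rfl, hn⟩ a ⟨⟨t', g⟩, ht'⟩ ⟨hR', hrel⟩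
    obtain ⟨t, hR, hZt⟩ := hZ.back hn a t' hR'
    exact ⟨⟨(t, g), (hpre g hZt).mpr ht'⟩, ⟨hR, hrel⟩, rfl, hZt⟩

end IsBisimOn

theorem sat_iff_of_isBisimOn {Δ : Set P} {φ : Form A P} (hφ : φ.Supports Δ)
    {N N' : Model A P} {Z : N.S → N'.S → Prop} (hZ : IsBisimOn Δ N N' Z)
    {n : N.S} {n' : N'.S} (hn : Z n n') : sat φ N n ↔ sat φ N' n' := by
  induction φ generalizing N N' Z n n' with
  | atom p => exact hZ.atoms hn p hφ
  | top | bot => exact Iff.rfl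
  | neg _ ih => exact not_congr (ih hφ hZ hn)
  | and _ _ ih₁ ih₂ => exact and_congr (ih₁ hφ.1 hZ hn) (ih₂ hφ.2 hZ hn)
  | box a _ ih =>
    refine ⟨fun h t' hR' => ?_, fun h t hR => ?_⟩
    · obtain ⟨t, hR, hZt⟩ := hZ.back hn a t' hR'
      exact (ih hφ hZ hZt).mp (h t hR)
    · obtain ⟨t', hR', hZt⟩ := hZ.forth hn a t hR
      exact (ih hφ hZ hZt).mpr (h t' hR')
  | cbox B _ ih =>
    refine ⟨fun h t' ht' => ?_, fun h t ht => ?_⟩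
    · obtain ⟨t, ht, hZt⟩ := hZ.symm.reflTransGen_forth B ht' hn
      exact (ih hφ hZ hZt).mp (h t ht)
    · obtain ⟨t', ht', hZt⟩ := hZ.reflTransGen_forth B ht hn
      exact (ih hφ hZ hZt).mpr (h t' ht')
  | upd E rel pre post e _ ihpre ihpost ihψ =>
    obtain ⟨hpre, hpost, hψ⟩ := hφ
    have hpreZ : ∀ f {m m'}, Z m m' → (sat (pre f) N m ↔ sat (pre f) N' m') :=
      fun f _ _ hm => ihpre f (hpre f) hZ hm
    have hpostZ : ∀ f {m m'}, Z m m' → ∀ p ∈ Δ,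
        (sat (post f p) N m ↔ sat (post f p) N' m') := by
      intro f m m' hm p hp
      rcases hpost f p with hid | hsup
      · rw [hid]
        exact hZ.atoms hm p hp
      · exact ihpost f p hsup hZ hm
    have hprod := hZ.prodM E rel hpreZ hpostZ
    exact ⟨fun h h' => (ihψ hψ hprod ⟨rfl, hn⟩).mp (h ((hpreZ e hn).mpr h')),
      fun h h' => (ihψ hψ hprod ⟨rfl, hn⟩).mpr (h ((hpreZ e hn).mp h'))⟩

theorem Bisimilar.refl (M : Model A P) (s : M.S) : Bisimilar M M s s :=
  ⟨Eq, ⟨⟨s, s, rfl⟩, by rintro _ _ rfl; exact ⟨fun _ => Iff.rfl,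
    fun _ t h => ⟨t, h, rfl⟩, fun _ t h => ⟨t, h, rfl⟩⟩⟩, rfl⟩

theorem SerialOn.bisimilar_closure {M : Model A P} {S₀ : Set M.S} {a : A}
    (h : SerialOn M S₀ a) : SerialOn M {t | ∃ w ∈ S₀, Bisimilar M M t w} a := by
  rintro t ⟨w, hw, Z, hZ, htw⟩
  obtain ⟨w', hw', hR⟩ := h w hw
  obtain ⟨u, hRu, huw'⟩ := (hZ.2 t w htw).2.2 a w' hR
  exact ⟨u, ⟨w', hw', Z, hZ, huw'⟩, hRu⟩

theorem sat_bigOr {l : List (Form A P)} {N : Model A P} {t : N.S} :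
    sat (bigOr l) N t ↔ ∃ ψ ∈ l, sat ψ N t := by
  induction l with
  | nil => simp [bigOr, sat]
  | cons φ l ih =>
    show ¬(¬sat φ N t ∧ ¬sat (bigOr l) N t) ↔ _
    rw [ih, List.exists_mem_cons_iff, not_and_or, not_not, not_not]

theorem wf_bigOr {l : List (Form A P)} (h : ∀ ψ ∈ l, ψ.WF) : (bigOr l).WF := by
  induction l with
  | nil => trivial
  | cons φ l ih =>
    exact ⟨h φ List.mem_cons_self, ih fun ψ hψ => h ψ (List.mem_cons_of_mem φ hψ)⟩

theorem exists_wf_sat_iff_exists_bisimilar {M : Model A P} {T : Set M.S} (hT : T.Finite)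
    (hδ : ∀ u ∈ T, ∃ d : Form A P, d.WF ∧ CharFml M u d) :
    ∃ δ : Form A P, δ.WF ∧
      ∀ N : Model A P, Nonempty N.S → ∀ t : N.S, sat δ N t ↔ ∃ u ∈ T, Bisimilar N M t u := by
  have : Nonempty (Form A P) := ⟨.top⟩
  choose! d hdWF hdChar using hδ
  refine ⟨bigOr (hT.toFinset.toList.map d), wf_bigOr ?_, fun N hN t => ?_⟩
  · simp only [List.mem_map, Finset.mem_toList, Set.Finite.mem_toFinset]
    rintro _ ⟨u, hu, rfl⟩
    exact hdWF u hu
  · simp only [sat_bigOr, List.mem_map, Finset.mem_toList, Set.Finite.mem_toFinset,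
      exists_exists_and_eq_and]
    exact exists_congr fun u => and_congr_right fun hu => hdChar u hu N hN t

open Classical in
noncomputable def Upd.copyOn (M' : Model A P) (Δ : Set P) (δ : Form A P) : Upd A P where
  E := M'.S
  rel := M'.R
  pre _ := δ
  post t' p := if p ∈ Δ then (if M'.V p t' then Form.top else Form.bot) else Form.atom p

theorem Upd.copyOn_wf {M' : Model A P} {Δ : Set P} {δ : Form A P} (hne : Nonempty M'.S)
    (hfin : Finite M'.S) (hδ : δ.WF) (hΔ : Δ.Finite) : (Upd.copyOn M' Δ δ).WF := by
  refine ⟨hne, hfin, fun _ => hδ, fun t' p => ?_, fun t' => hΔ.subset fun p hp => ?_⟩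
  · dsimp only [Upd.copyOn]
    split_ifs <;> trivial
  · by_contra hpΔ
    exact hp (if_neg hpΔ)

theorem isBisimOn_prodUpd_copyOn {M M' : Model A P} {Δ : Set P} {δ : Form A P}
    (hser : ∀ a : A, (∃ x y, M'.R a x y) → SerialOn M {t | sat δ M t} a) :
    IsBisimOn Δ (M.prodUpd (Upd.copyOn M' Δ δ)) M' (fun x t' => x.1.2 = t') where
  atoms := by
    rintro ⟨⟨t, t'⟩, _⟩ _ rfl p hp
    simp only [Model.prodUpd, prodM, Upd.copyOn, hp, if_true]
    split_ifs with hV <;> simp [sat, hV]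
  forth := by
    rintro _ _ rfl a _ ⟨_, hR'⟩
    exact ⟨_, hR', rfl⟩
  back := by
    rintro ⟨⟨t, t'⟩, ht⟩ _ rfl a u' hR'
    obtain ⟨u, hu, hR⟩ := hser a ⟨t', u', hR'⟩ t ht
    exact ⟨⟨(u, u'), hu⟩, ⟨hR, hR'⟩, rfl⟩

theorem sat_neg_updF_neg {M : Model A P} {U : Upd A P} {e : U.E} {φ : Form A P} {s : M.S} :
    sat (.neg (.updF U e (.neg φ))) M s ↔
      ∃ h : sat (U.pre e) M s, sat φ (M.prodUpd U) ⟨(s, e), h⟩ := by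
  simp only [Form.updF, sat, Model.prodUpd, not_forall, not_not]

theorem realization_general {A P : Type}
    (M : Model A P) (hMfin : Finite M.S) (s : M.S)
    (φ : Form A P) (hφ : φ.WF)
    (M' : Model A P) (hM'fin : Finite M'.S) (s' : M'.S)
    (hsat : sat φ M' s')
    (Sser : Set M.S) (hsmem : s ∈ Sser)
    (hser : ∀ a : A, (∃ x y, M'.R a x y) → SerialOn M Sser a)
    (hδ : ∀ u ∈ Sser, ∃ d : Form A P, d.WF ∧ CharFml M u d) :
    ∃ (U : Upd A P) (e : U.E), U.WF ∧
      sat (Form.neg (Form.updF U e (Form.neg φ))) M s := by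
  obtain ⟨δ, hδWF, hδsat⟩ := exists_wf_sat_iff_exists_bisimilar (Set.toFinite Sser) hδ
  obtain ⟨Δ, hΔfin, hΔφ⟩ := hφ.exists_finite_supports
  have hδM : {t | sat δ M t} = {t | ∃ w ∈ Sser, Bisimilar M M t w} := Set.ext (hδsat M ⟨s⟩)
  have hZ : IsBisimOn Δ (M.prodUpd (Upd.copyOn M' Δ δ)) M' (fun x t' => x.1.2 = t') :=
    isBisimOn_prodUpd_copyOn fun a ha => hδM ▸ (hser a ha).bisimilar_closure
  have hpre : sat δ M s := (hδsat M ⟨s⟩ s).mpr ⟨s, hsmem, Bisimilar.refl M s⟩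
  exact ⟨Upd.copyOn M' Δ δ, s', Upd.copyOn_wf ⟨s'⟩ hM'fin hδWF hΔfin,
    sat_neg_updF_neg.mpr ⟨hpre, (sat_iff_of_isBisimOn hΔφ hZ rfl).mpr hsat⟩⟩

/-- if `φ` is satisfied in some finite epistemic state `(M',s')`, only
finitely many atoms are relevant in `M` or in `M'`, there is a set `S^ser ∋ s` serial
for every agent whose relation in `M'` is nonempty, and each `(M,u)` for `u ∈ S^ser`
has a characteristic formula, then there is an update `(U,e)` realizing `φ` at the
finite epistemic state `(M,s)`: `(M,s) ⊨ ⟨U,e⟩φ`, i.e. `(M,s) ⊨ ¬[U,e]¬φ`. -/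
theorem realization {A P : Type} [Finite A] [Countable P]
    (M : Model A P) (hMne : Nonempty M.S) (hMfin : Finite M.S) (s : M.S)
    (φ : Form A P) (hφ : φ.WF)
    (M' : Model A P) (hM'ne : Nonempty M'.S) (hM'fin : Finite M'.S) (s' : M'.S)
    (hsat : sat φ M' s')
    (hrel : {p | Relevant M p ∨ Relevant M' p}.Finite)
    (Sser : Set M.S) (hsmem : s ∈ Sser)
    (hser : ∀ a : A, (∃ x y, M'.R a x y) → SerialOn M Sser a)
    (hδ : ∀ u ∈ Sser, ∃ d : Form A P, d.WF ∧ CharFml M u d) :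
    ∃ (U : Upd A P) (e : U.E), U.WF ∧
      sat (Form.neg (Form.updF U e (Form.neg φ))) M s :=
  realization_general M hMfin s φ hφ M' hM'fin s' hsat Sser hsmem hser hδ
end

section
/- Let U = (E, R, pre, post) be an update model with normal update model U^TF, and let M = (S, R, V) be an epistemic model such that the domain of M ⊗ U is nonempty. Then the relation Z defined by ((s,e), (s,(e,f))) ∈ Z iff (M,s) ⊨ pre^TF(e,f) is a bisimulation between M ⊗ U and M ⊗ U^TF; in particular (M ⊗ U) and (M ⊗ U^TF) are bisimilar, with every (s,e) in the domain of M ⊗ U linked to (s,(e,f)) for the function f given by f(p) = 1 iff (M,s) ⊨ post(e)(p). -/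
open Classical in
/-- The normal update model `U^TF`: events are pairs `(e,f)` with `f` a Boolean-valued
function on `dom(post(e))`; `(e,f)` and `(e',f')` are `a`-related iff `e` and `e'` are;
`pre^TF(e,f) = pre(e) ∧ ⋀_{f(p)=1} post(e)(p) ∧ ⋀_{f(p)=0} ¬post(e)(p)` (the
conjunction taken over the enumeration `d e` of `dom(post(e))`); and
`post^TF(e,f)(p)` is `⊤` if `f(p) = 1` and `⊥` if `f(p) = 0`, for `p ∈ dom(post(e))`,
and the identity on other atoms. -/
noncomputable def TF {A P : Type} (U : Upd A P) (d : U.E → List P) : Upd A P where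
  E := Σ e : U.E, ({ p : P // U.post e p ≠ Form.atom p } → Bool)
  rel a x y := U.rel a x.1 y.1
  pre x := (U.pre x.1).and (bigAnd ((d x.1).map (fun p =>
      if h : U.post x.1 p = Form.atom p then Form.top
      else if x.2 ⟨p, h⟩ then U.post x.1 p else Form.neg (U.post x.1 p))))
  post x p :=
    if h : U.post x.1 p = Form.atom p then Form.atom p
    else if x.2 ⟨p, h⟩ then Form.top else Form.bot

/-!
An event `(e, f)` of `U^TF` guesses, through `f`, the truth value of every postcondition of `e`,
and its precondition checks the guess. So at a state `s` where `pre^TF(e, f)` holds, the constant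
postconditions `⊤`/`⊥` of `(e, f)` agree with the postconditions of `e`, and `(s, e)` and
`(s, (e, f))` satisfy the same atoms. Since `U^TF` relates events exactly as `U` relates their first
components, and every `(s, e)` has the correct guess `f(p) = [(M, s) ⊨ post(e)(p)]`, the back and
forth conditions reduce to those of the identity on `M` and on `U`.
-/

section NormalUpdateModel

variable {A P : Type}

lemma sat_bigAnd (l : List (Form A P)) (M : Model A P) (s : M.S) :
    sat (bigAnd l) M s ↔ ∀ φ ∈ l, sat φ M s := by
  induction l with
  | nil => simp [bigAnd, sat]
  | cons φ l ih =>
    simp only [bigAnd, List.foldr, sat, List.forall_mem_cons] at ih ⊢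
    rw [ih]

def IsTruthRecord (U : Upd A P) (M : Model A P) (s : M.S) (e : U.E)
    (f : { p : P // U.post e p ≠ Form.atom p } → Bool) : Prop :=
  ∀ q, f q = true ↔ sat (U.post e q.1) M s

lemma sat_TF_pre_iff (U : Upd A P) (d : U.E → List P)
    (hd : ∀ e p, p ∈ d e ↔ U.post e p ≠ Form.atom p)
    (M : Model A P) (s : M.S) (x : (TF U d).E) :
    sat ((TF U d).pre x) M s ↔ sat (U.pre x.1) M s ∧ IsTruthRecord U M s x.1 x.2 := by
  obtain ⟨e, f⟩ := x
  have literal_iff : ∀ p (hp : U.post e p ≠ Form.atom p),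
      sat (if f ⟨p, hp⟩ then U.post e p else (U.post e p).neg) M s ↔
        (f ⟨p, hp⟩ = true ↔ sat (U.post e p) M s) := by
    intro p hp
    cases f ⟨p, hp⟩ <;> simp [sat]
  show sat (U.pre e) M s ∧ _ ↔ _
  rw [sat_bigAnd, List.forall_mem_map]
  refine and_congr_right fun _ => ⟨fun h q => ?_, fun h p hp => ?_⟩
  · have hq := h q.1 ((hd e q.1).2 q.2)
    rwa [dif_neg q.2, literal_iff] at hq
  · have hne := (hd e p).1 hp
    rw [dif_neg hne, literal_iff]
    exact h ⟨p, hne⟩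

lemma sat_TF_post_iff (U : Upd A P) (d : U.E → List P) (M : Model A P) (s : M.S)
    (x : (TF U d).E) (hx : IsTruthRecord U M s x.1 x.2) (p : P) :
    sat ((TF U d).post x p) M s ↔ sat (U.post x.1 p) M s := by
  dsimp only [TF]
  by_cases h : U.post x.1 p = Form.atom p
  · rw [dif_pos h, h]
  · rw [dif_neg h, ← hx ⟨p, h⟩]
    cases x.2 ⟨p, h⟩ <;> simp [sat]

open Classical in
noncomputable def truthEvent (U : Upd A P) (d : U.E → List P) (M : Model A P) (s : M.S)
    (e : U.E) : (TF U d).E :=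
  ⟨e, fun q => decide (sat (U.post e q.1) M s)⟩

lemma isTruthRecord_truthEvent (U : Upd A P) (d : U.E → List P) (M : Model A P) (s : M.S)
    (e : U.E) : IsTruthRecord U M s e (truthEvent U d M s e).2 := by
  intro q
  simp [truthEvent]

noncomputable def truthState (U : Upd A P) (d : U.E → List P)
    (hd : ∀ e p, p ∈ d e ↔ U.post e p ≠ Form.atom p) (M : Model A P)
    (x : (M.prodUpd U).S) : (M.prodUpd (TF U d)).S :=
  ⟨(x.1.1, truthEvent U d M x.1.1 x.1.2),
    (sat_TF_pre_iff U d hd M _ _).2 ⟨x.2, isTruthRecord_truthEvent U d M _ _⟩⟩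

end NormalUpdateModel

theorem normal_update_model_bisimulation_general {A P : Type}
    (M : Model A P)
    (U : Upd A P)
    (d : U.E → List P) (hd : ∀ e p, p ∈ d e ↔ U.post e p ≠ Form.atom p)
    (hdom : Nonempty (M.prodUpd U).S) :
    Bisim (M.prodUpd U) (M.prodUpd (TF U d))
      (fun x y => x.1.1 = y.1.1 ∧ x.1.2 = y.1.2.1 ∧ sat ((TF U d).pre y.1.2) M x.1.1) ∧
    ∀ x : (M.prodUpd U).S, ∃ y : (M.prodUpd (TF U d)).S,
      y.1.1 = x.1.1 ∧ y.1.2.1 = x.1.2 ∧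
      (∀ q : { p : P // U.post y.1.2.1 p ≠ Form.atom p },
        (y.1.2.2 q = true ↔ sat (U.post x.1.2 q.1) M x.1.1)) ∧
      (x.1.1 = y.1.1 ∧ x.1.2 = y.1.2.1 ∧ sat ((TF U d).pre y.1.2) M x.1.1) := by
  refine ⟨⟨?_, ?_⟩, fun x => ⟨truthState U d hd M x, rfl, rfl, isTruthRecord_truthEvent U d M _ _,
    rfl, rfl, (truthState U d hd M x).2⟩⟩
  · obtain ⟨x⟩ := hdom
    exact ⟨x, truthState U d hd M x, rfl, rfl, (truthState U d hd M x).2⟩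
  rintro ⟨⟨s, e⟩, hs⟩ ⟨⟨s', ⟨e', f⟩⟩, hs'⟩ ⟨rfl, rfl, hZ⟩
  have hrecord := ((sat_TF_pre_iff U d hd M s _).1 hZ).2
  refine ⟨fun p => (sat_TF_post_iff U d M s _ hrecord p).symm, ?_, ?_⟩
  · rintro a y ⟨hR, hrel⟩
    exact ⟨truthState U d hd M y, ⟨hR, hrel⟩, rfl, rfl, (truthState U d hd M y).2⟩
  · rintro a ⟨⟨t, y⟩, ht⟩ ⟨hR, hrel⟩
    exact ⟨⟨(t, y.1), ((sat_TF_pre_iff U d hd M t y).1 ht).1⟩, ⟨hR, hrel⟩, rfl, rfl, ht⟩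

/-- the relation `Z` given by `((s,e),(s,(e,f))) ∈ Z` iff
`(M,s) ⊨ pre^TF(e,f)` is a bisimulation between `M ⊗ U` and `M ⊗ U^TF`; in
particular `M ⊗ U` and `M ⊗ U^TF` are bisimilar, with every `(s,e)` in the domain
of `M ⊗ U` linked to `(s,(e,f))` for the function `f` given by `f(p) = 1` iff
`(M,s) ⊨ post(e)(p)`.  (The list `d e` enumerates `dom(post(e))`.) -/
theorem normal_update_model_bisimulation {A P : Type} [Finite A] [Countable P]
    (M : Model A P) (hMne : Nonempty M.S)
    (U : Upd A P) (hU : U.WF)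
    (d : U.E → List P) (hd : ∀ e p, p ∈ d e ↔ U.post e p ≠ Form.atom p)
    (hdom : Nonempty (M.prodUpd U).S) :
    Bisim (M.prodUpd U) (M.prodUpd (TF U d))
      (fun x y => x.1.1 = y.1.1 ∧ x.1.2 = y.1.2.1 ∧ sat ((TF U d).pre y.1.2) M x.1.1) ∧
    ∀ x : (M.prodUpd U).S, ∃ y : (M.prodUpd (TF U d)).S,
      y.1.1 = x.1.1 ∧ y.1.2.1 = x.1.2 ∧
      (∀ q : { p : P // U.post y.1.2.1 p ≠ Form.atom p },
        (y.1.2.2 q = true ↔ sat (U.post x.1.2 q.1) M x.1.1)) ∧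
      (x.1.1 = y.1.1 ∧ x.1.2 = y.1.2.1 ∧ sat ((TF U d).pre y.1.2) M x.1.1) :=
  normal_update_model_bisimulation_general M U d hd hdom
end

section
/- Let U = (E, R, pre, post) be an update model, let M = (S, R, V) be an epistemic model such that the domain of M ⊗ U is nonempty, and let Q ⊆ P be a set of atoms not occurring in U (neither in preconditions, nor in postcondition values, nor in postcondition domains) of cardinality Σ_{e ∈ E} (|dom(post(e))| + 1). Then there exists a finite sequence U₁, …, U_m of update models, each of whose events g satisfies |dom(post(g))| ≤ 1 (at most one atom is assigned by each event), such that the iterated product N = (…(M ⊗ U₁) ⊗ …) ⊗ U_m has nonempty domain and there is a bijection h from the domain of M ⊗ U onto the domain of N that preserves and reflects each accessibility relation R(a) and preserves and reflects the valuation of every atom p ∈ P \ Q. -/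
/-- The atom `q` occurs in a formula: as an atom, or inside an update model occurring
in it (in a precondition, in a postcondition value, or in a postcondition domain). -/
def occursIn {A P : Type} (q : P) : Form A P → Prop
  | .atom p => p = q
  | .top => False
  | .bot => False
  | .neg φ => occursIn q φ
  | .and φ ψ => occursIn q φ ∨ occursIn q ψ
  | .box _ φ => occursIn q φ
  | .cbox _ φ => occursIn q φ
  | .upd _ _ pre post _ φ =>
      (∃ f, occursIn q (pre f)) ∨ (∃ f p, occursIn q (post f p)) ∨
      (∃ f, post f q ≠ Form.atom q) ∨ occursIn q φ

/-- The atom `q` occurs in the update model `U`: in a precondition, in a postcondition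
value, or in a postcondition domain. -/
def Upd.occursAtom {A P : Type} (U : Upd A P) (q : P) : Prop :=
  (∃ f, occursIn q (U.pre f)) ∨ (∃ f p, occursIn q (U.post f p)) ∨
  (∃ f, U.post f q ≠ Form.atom q)

/-- Iterated product update `(…(M ⊗ U₁) ⊗ …) ⊗ U_m`. -/
def prodUpds {A P : Type} : Model A P → List (Upd A P) → Model A P
  | M, [] => M
  | M, U :: l => prodUpds (M.prodUpd U) l

/-!
The fresh atoms serve as registers: a marker `r e` for every event `e` and a store `q e p` for
every `p ∈ dom(post(e))`. Public single assignments `q e p := post(e)(p)` and `r e := ⊥` first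
evaluate all postconditions on `M`; as the atoms of `Q` do not occur in `U`, this changes neither
the frame nor the truth of the preconditions. Then `U` is executed with every event `e` assigning
only `r e := ⊤`, so that the markers record the event a state comes from. Finally the public
conditional copies `p := (r e ∧ q e p) ∨ (¬ r e ∧ p)` move the stored values into the atoms of
`P \ Q`. Public assignments leave the frame unchanged, so the states of `M ⊗ U` correspond to
those of the last model.
-/

variable {A P : Type}

/-- `dom(post(e))`. -/
def Upd.dom (U : Upd A P) (e : U.E) : Set P := {p | U.post e p ≠ Form.atom p}

structure Model.FrameEquiv (M N : Model A P) extends M.S ≃ N.S where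
  rel_iff : ∀ a x y, M.R a x y ↔ N.R a (toEquiv x) (toEquiv y)

namespace Model.FrameEquiv

variable {M N K : Model A P}

instance : CoeFun (M.FrameEquiv N) (fun _ => M.S → N.S) := ⟨fun F => F.toEquiv⟩

def trans (F : M.FrameEquiv N) (G : N.FrameEquiv K) : M.FrameEquiv K where
  toEquiv := F.toEquiv.trans G.toEquiv
  rel_iff a x y := (F.rel_iff a x y).trans (G.rel_iff a _ _)

@[simp] theorem trans_apply (F : M.FrameEquiv N) (G : N.FrameEquiv K) (s : M.S) :
    F.trans G s = G (F s) := rfl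

theorem bijective (F : M.FrameEquiv N) : Function.Bijective F := F.toEquiv.bijective

theorem reflTransGen_iff (F : M.FrameEquiv N) (B : Set A) (s t : M.S) :
    Relation.ReflTransGen (fun x y => ∃ a ∈ B, M.R a x y) s t ↔
      Relation.ReflTransGen (fun x y => ∃ a ∈ B, N.R a x y) (F s) (F t) := by
  constructor
  · intro h
    refine Relation.ReflTransGen.lift F (fun x y hxy => ?_) s t h
    obtain ⟨a, ha, hxy⟩ := hxy
    exact ⟨a, ha, (F.rel_iff a x y).mp hxy⟩
  · intro h
    have := Relation.ReflTransGen.lift (p := fun x y => ∃ a ∈ B, M.R a x y) F.toEquiv.symm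
      (fun x y hxy => ?_) _ _ h
    · simpa [Function.onFun] using this
    obtain ⟨a, ha, hxy⟩ := hxy
    exact ⟨a, ha, (F.rel_iff a _ _).mpr (by simpa using hxy)⟩

def prodMCongr (F : M.FrameEquiv N) {E : Type} (rel : A → E → E → Prop)
    {preM : E → M.S → Prop} {preN : E → N.S → Prop} (postM : E → M.S → P → Prop)
    (postN : E → N.S → P → Prop) (hpre : ∀ f s, preM f s ↔ preN f (F s)) :
    (_root_.prodM M E rel preM postM).FrameEquiv (_root_.prodM N E rel preN postN) where
  toEquiv := F.toEquiv.prodCongr (Equiv.refl E) |>.subtypeEquiv fun x => hpre x.2 x.1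
  rel_iff a x y := and_congr (F.rel_iff a x.1.1 y.1.1) Iff.rfl

theorem sat_iff (φ : Form A P) : ∀ {M N : Model A P} (F : M.FrameEquiv N),
    (∀ p, occursIn p φ → ∀ s, M.V p s ↔ N.V p (F s)) → ∀ s, sat φ M s ↔ sat φ N (F s) := by
  induction φ with
  | atom p => exact fun F hV s => hV p rfl s
  | top | bot => exact fun _ _ _ => Iff.rfl
  | neg φ ih => exact fun F hV s => not_congr (ih F hV s)
  | and φ ψ ihφ ihψ =>
    exact fun F hV s => and_congr (ihφ F (fun p hp => hV p (.inl hp)) s)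
      (ihψ F (fun p hp => hV p (.inr hp)) s)
  | box a φ ih =>
    intro M N F hV s
    exact F.toEquiv.forall_congr fun t => imp_congr (F.rel_iff a s t) (ih F hV t)
  | cbox B φ ih =>
    intro M N F hV s
    exact F.toEquiv.forall_congr fun t => imp_congr (F.reflTransGen_iff B s t) (ih F hV t)
  | upd E rel pre post e φ ihpre ihpost ihφ =>
    intro M N F hV s
    have hpre : ∀ f t, sat (pre f) M t ↔ sat (pre f) N (F t) := fun f =>
      ihpre f F fun p hp => hV p (.inl ⟨f, hp⟩)
    have hpost : ∀ f p t, sat (post f p) M t ↔ sat (post f p) N (F t) := fun f p =>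
      ihpost f p F fun q hq => hV q (.inr (.inl ⟨f, p, hq⟩))
    let G := F.prodMCongr rel (fun f t p => sat (post f p) M t)
      (fun f t p => sat (post f p) N t) hpre
    have hG := ihφ G fun p _ x => hpost x.1.2 p x.1.1
    exact ⟨fun H h => (hG ⟨(s, e), (hpre e s).mpr h⟩).mp (H _),
      fun H h => (hG ⟨(s, e), h⟩).mpr (H ((hpre e s).mp h))⟩

end Model.FrameEquiv

/-- The formula `(c ∧ φ) ∨ (¬c ∧ ψ)`. -/
def Form.ite (c φ ψ : Form A P) : Form A P :=
  .neg (.and (.neg (.and c φ)) (.neg (.and (.neg c) ψ)))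

theorem sat_ite (c φ ψ : Form A P) (M : Model A P) (s : M.S) :
    sat (Form.ite c φ ψ) M s ↔ (sat c M s ∧ sat φ M s) ∨ (¬ sat c M s ∧ sat ψ M s) := by
  simp only [Form.ite, sat]
  tauto

theorem Form.WF.ite {c φ ψ : Form A P} (hc : c.WF) (hφ : φ.WF) (hψ : ψ.WF) :
    (Form.ite c φ ψ).WF :=
  ⟨⟨hc, hφ⟩, ⟨hc, hψ⟩⟩

def Upd.AssignsAtMostOne (U : Upd A P) : Prop := ∀ g, (U.dom g).Subsingleton

theorem prodUpds_append (M : Model A P) (l₁ l₂ : List (Upd A P)) :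
    prodUpds M (l₁ ++ l₂) = prodUpds (prodUpds M l₁) l₂ := by
  induction l₁ generalizing M with
  | nil => rfl
  | cons U l ih => exact ih _

section Assignments

variable [DecidableEq P]

def Upd.singleAssign (E : Type) (rel : A → E → E → Prop) (pre : E → Form A P) (t : E → P)
    (φ : E → Form A P) : Upd A P where
  E := E
  rel := rel
  pre := pre
  post f p := if p = t f then φ f else .atom p

section singleAssign

variable {E : Type} {rel : A → E → E → Prop} {pre : E → Form A P} {t : E → P}
  {φ : E → Form A P}

theorem Upd.dom_singleAssign_subset (f : E) :
    (Upd.singleAssign E rel pre t φ).dom f ⊆ {t f} := by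
  intro p hp
  by_contra hpt
  exact hp (if_neg hpt)

theorem Upd.assignsAtMostOne_singleAssign :
    (Upd.singleAssign E rel pre t φ).AssignsAtMostOne := fun f =>
  Set.subsingleton_singleton.anti (Upd.dom_singleAssign_subset f)

theorem Upd.singleAssign_WF [Nonempty E] [Finite E] (hpre : ∀ f, (pre f).WF)
    (hφ : ∀ f, (φ f).WF) : (Upd.singleAssign E rel pre t φ).WF := by
  refine ⟨‹_›, ‹_›, hpre, fun f p => ?_, fun f => (Set.finite_singleton _).subset
    (Upd.dom_singleAssign_subset f)⟩
  by_cases hp : p = t f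
  · simpa [Upd.singleAssign, hp] using hφ f
  · simp only [Upd.singleAssign, hp, if_false]
    trivial

theorem prodUpd_singleAssign_V (N : Model A P) (p : P) (s : N.S) (f : E)
    (h : sat (pre f) N s) :
    (N.prodUpd (Upd.singleAssign E rel pre t φ)).V p ⟨(s, f), h⟩ ↔
      if p = t f then sat (φ f) N s else N.V p s := by
  change sat (if p = t f then φ f else .atom p) N s ↔ _
  split_ifs <;> rfl

end singleAssign

def publicAssign (t : P) (φ : Form A P) : Upd A P :=
  Upd.singleAssign Unit (fun _ _ _ => True) (fun _ => .top) (fun _ => t) (fun _ => φ)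

theorem publicAssign_WF (t : P) {φ : Form A P} (hφ : φ.WF) : (publicAssign t φ).WF :=
  Upd.singleAssign_WF (fun _ => trivial) fun _ => hφ

def Model.publicAssignEquiv (N : Model A P) (t : P) (φ : Form A P) :
    N.FrameEquiv (N.prodUpd (publicAssign t φ)) where
  toEquiv :=
    { toFun s := ⟨(s, ()), trivial⟩
      invFun x := x.1.1
      left_inv _ := rfl
      right_inv _ := rfl }
  rel_iff _ _ _ := ⟨fun h => ⟨h, trivial⟩, And.left⟩

theorem Model.publicAssignEquiv_V (N : Model A P) (t : P) (φ : Form A P) (p : P) (s : N.S) :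
    (N.prodUpd (publicAssign t φ)).V p (N.publicAssignEquiv t φ s) ↔
      if p = t then sat φ N s else N.V p s :=
  prodUpd_singleAssign_V (pre := fun _ => .top) N p s () trivial

theorem exists_frameEquiv_publicAssigns {ι : Type*} (t : ι → P) (φ : ι → Form A P) :
    ∀ (l : List ι) (N : Model A P), (l.map t).Nodup →
      (∀ i ∈ l, ∀ j ∈ l, ¬ occursIn (t i) (φ j)) →
      ∃ F : N.FrameEquiv (prodUpds N (l.map fun i => publicAssign (t i) (φ i))),
        (∀ i ∈ l, ∀ s,
          (prodUpds N (l.map fun i => publicAssign (t i) (φ i))).V (t i) (F s) ↔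
            sat (φ i) N s) ∧
        ∀ p ∉ l.map t, ∀ s,
          (prodUpds N (l.map fun i => publicAssign (t i) (φ i))).V p (F s) ↔ N.V p s
  | [], N, _, _ => ⟨⟨Equiv.refl _, fun _ _ _ => Iff.rfl⟩, by simp, fun _ _ _ => Iff.rfl⟩
  | i :: l, N, hnd, hfresh => by
    rw [List.map_cons, List.nodup_cons] at hnd
    let F₁ := N.publicAssignEquiv (t i) (φ i)
    obtain ⟨F₂, hassigned, hkept⟩ := exists_frameEquiv_publicAssigns t φ l _ hnd.2
      fun j hj k hk => hfresh j (.tail _ hj) k (.tail _ hk)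
    simp only [List.map_cons]
    refine ⟨F₁.trans F₂, ?_, ?_⟩
    · rintro j (_ | ⟨_, hj⟩) s
      · exact (hkept _ hnd.1 _).trans (by rw [N.publicAssignEquiv_V, if_pos rfl])
      · refine (hassigned j hj _).trans (F₁.sat_iff (φ j) (fun p hp s => ?_) s).symm
        have hpi : p ≠ t i := by rintro rfl; exact hfresh i (.head _) j (.tail _ hj) hp
        rw [N.publicAssignEquiv_V, if_neg hpi]
    · intro p hp s
      rw [List.mem_cons, not_or] at hp
      exact (hkept p hp.2 _).trans (by rw [N.publicAssignEquiv_V, if_neg hp.1])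

abbrev condCopy (c q p : P) : Upd A P :=
  publicAssign p (Form.ite (.atom c) (.atom q) (.atom p))

theorem Model.condCopy_V (K : Model A P) (c q p p' : P) (s : K.S) :
    (K.prodUpd (condCopy c q p)).V p' (K.publicAssignEquiv p _ s) ↔
      if p' = p then (K.V c s ∧ K.V q s) ∨ (¬ K.V c s ∧ K.V p s) else K.V p' s := by
  rw [K.publicAssignEquiv_V, sat_ite]
  rfl

theorem exists_frameEquiv_condCopies {E : Type} [DecidableEq E] (Q : Set P) (r : E → P)
    (q : E → P → P) (hrQ : ∀ e, r e ∈ Q) :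
    ∀ (l : List (E × P)) (K : Model A P) (ev : K.S → E), (∀ e s, K.V (r e) s ↔ ev s = e) →
      (∀ c ∈ l, q c.1 c.2 ∈ Q ∧ c.2 ∉ Q) →
      ∃ F : K.FrameEquiv (prodUpds K (l.map fun c => condCopy (r c.1) (q c.1 c.2) c.2)),
        ∀ p s, (prodUpds K (l.map fun c => condCopy (r c.1) (q c.1 c.2) c.2)).V p (F s) ↔
          if (ev s, p) ∈ l then K.V (q (ev s) p) s else K.V p s
  | [], K, _, _, _ => ⟨⟨Equiv.refl _, fun _ _ _ => Iff.rfl⟩, fun _ _ => by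
    rw [if_neg List.not_mem_nil]
    exact Iff.rfl⟩
  | (e₀, p₀) :: l, K, ev, hr, hl => by
    obtain ⟨-, hp₀⟩ := hl _ (.head _)
    let F₁ := K.publicAssignEquiv p₀ (Form.ite (.atom (r e₀)) (.atom (q e₀ p₀)) (.atom p₀))
    have hV₁ : ∀ p s, (K.prodUpd (condCopy (r e₀) (q e₀ p₀) p₀)).V p (F₁ s) ↔
        if p = p₀ then (ev s = e₀ ∧ K.V (q e₀ p₀) s) ∨ (ev s ≠ e₀ ∧ K.V p₀ s) else K.V p s := by
      intro p s
      rw [K.condCopy_V, hr]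
    have hQ₁ : ∀ p ∈ Q, ∀ s, (K.prodUpd (condCopy (r e₀) (q e₀ p₀) p₀)).V p (F₁ s) ↔ K.V p s := by
      intro p hp s
      rw [hV₁, if_neg (by rintro rfl; exact hp₀ hp)]
    obtain ⟨F₂, hF₂⟩ := exists_frameEquiv_condCopies Q r q hrQ l _ (ev ∘ F₁.toEquiv.symm)
      (fun e s' => by
        obtain ⟨s, rfl⟩ := F₁.toEquiv.surjective s'
        simpa using (hQ₁ _ (hrQ e) s).trans (hr e s))
      fun c hc => hl c (.tail _ hc)
    refine ⟨F₁.trans F₂, fun p s => (hF₂ p (F₁ s)).trans ?_⟩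
    simp only [Function.comp_apply, Equiv.symm_apply_apply, List.mem_cons, Prod.mk.injEq]
    by_cases htl : (ev s, p) ∈ l
    · simpa [htl] using hQ₁ _ (hl _ (.tail _ htl)).1 s
    by_cases hhd : ev s = e₀ ∧ p = p₀
    · obtain ⟨he, rfl⟩ := hhd
      simp [he, hV₁]
    by_cases hp : p = p₀
    · have he : ev s ≠ e₀ := fun he => hhd ⟨he, hp⟩
      subst hp
      simp [htl, he, hV₁]
    · simp [htl, hp, hV₁]

end Assignments

theorem exists_injective_mem_of_card_eq {ι : Type*} [Finite ι] [Nonempty ι] {Q : Set P}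
    (h : Nat.card ι = Q.ncard) : ∃ f : ι → P, Function.Injective f ∧ ∀ i, f i ∈ Q := by
  have : Finite Q := Nat.finite_of_card_ne_zero (h ▸ Nat.card_pos.ne' : Q.ncard ≠ 0)
  obtain ⟨σ⟩ := Finite.card_eq.mp h
  exact ⟨fun i => σ i, Subtype.val_injective.comp σ.injective, fun i => (σ i).2⟩

/-- One register per event (`none`, for a marker) and per atom assigned by it. -/
abbrev Upd.Slot (U : Upd A P) : Type := (e : U.E) × Option (U.dom e)

section WF

variable {U : Upd A P} (hU : U.WF)
include hU

theorem Upd.WF.finite_dom (e : U.E) : Finite (U.dom e) := (hU.2.2.2.2 e).to_subtype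

theorem Upd.WF.finite_slot : Finite U.Slot := by
  have := hU.2.1
  have := hU.finite_dom
  exact inferInstanceAs (Finite ((e : U.E) × Option (U.dom e)))

theorem Upd.WF.card_slot [Fintype U.E] :
    Nat.card U.Slot = ∑ e : U.E, ((U.dom e).ncard + 1) := by
  have := hU.finite_dom
  simp [Upd.Slot, Nat.card_sigma, Finite.card_option]

theorem Upd.WF.exists_list_mem_iff_mem_dom :
    ∃ l : List (U.E × P), ∀ c, c ∈ l ↔ c.2 ∈ U.dom c.1 := by
  have := hU.2.1
  have := hU.finite_dom
  have hfin : {c : U.E × P | c.2 ∈ U.dom c.1}.Finite :=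
    (Set.finite_range fun i : (e : U.E) × U.dom e => (i.1, i.2.1)).subset
      fun c hc => ⟨⟨c.1, c.2, hc⟩, rfl⟩
  exact ⟨hfin.toFinset.toList, fun c => by simp⟩

end WF

theorem exists_frameEquiv_marked (M : Model A P) {U : Upd A P} (hU : U.WF)
    (Q : Set P) (hQfresh : ∀ q ∈ Q, ¬ U.occursAtom q) (code : U.Slot → P)
    (hcode : Function.Injective code) (hcodeQ : ∀ i, code i ∈ Q) :
    ∃ l : List (Upd A P), (∀ Ui ∈ l, Ui.WF ∧ Ui.AssignsAtMostOne) ∧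
      ∃ F : (M.prodUpd U).FrameEquiv (prodUpds M l),
        (∀ e x, (prodUpds M l).V (code ⟨e, none⟩) (F x) ↔ x.1.2 = e) ∧
        (∀ e p x, (prodUpds M l).V (code ⟨e, some p⟩) (F x) ↔ sat (U.post e p) M x.1.1) ∧
        ∀ p ∉ Q, ∀ x, (prodUpds M l).V p (F x) ↔ M.V p x.1.1 := by
  classical
  have := hU.finite_slot
  obtain ⟨slots, hnd, hmem⟩ := Finite.exists_univ_list U.Slot
  let stored : U.Slot → Form A P := fun i => i.2.elim .bot fun p => U.post i.1 p
  obtain ⟨F₁, hstored, hkept⟩ := exists_frameEquiv_publicAssigns code stored slots M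
    (hnd.map hcode) fun i _ ⟨e, d⟩ _ hocc => by
      cases d with
      | none => exact hocc
      | some p => exact hQfresh _ (hcodeQ i) (.inr (.inl ⟨e, p, hocc⟩))
  have hkeptQ : ∀ p ∉ Q, ∀ s, (prodUpds M (slots.map fun i =>
      publicAssign (code i) (stored i))).V p (F₁ s) ↔ M.V p s := fun p hp =>
    hkept p fun hp' => by
      obtain ⟨i, -, rfl⟩ := List.mem_map.mp hp'
      exact hp (hcodeQ i)
  have hpre : ∀ f s, sat (U.pre f) M s ↔ sat (U.pre f) _ (F₁ s) := fun f =>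
    F₁.sat_iff _ fun p hp s => (hkeptQ p (fun hpQ => hQfresh p hpQ (.inl ⟨f, hp⟩)) s).symm
  let marked := Upd.singleAssign U.E U.rel U.pre (fun e => code ⟨e, none⟩) fun _ => .top
  refine ⟨slots.map (fun i => publicAssign (code i) (stored i)) ++ [marked], ?_, ?_⟩
  · simp only [List.mem_append, List.mem_map, List.mem_singleton]
    have := hU.1
    have := hU.2.1
    rintro _ (⟨⟨e, _ | p⟩, -, rfl⟩ | rfl)
    · exact ⟨publicAssign_WF _ trivial, Upd.assignsAtMostOne_singleAssign⟩
    · exact ⟨publicAssign_WF _ (hU.2.2.2.1 e p), Upd.assignsAtMostOne_singleAssign⟩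
    · exact ⟨Upd.singleAssign_WF hU.2.2.1 fun _ => trivial, Upd.assignsAtMostOne_singleAssign⟩
  rw [prodUpds_append, prodUpds, prodUpds]
  let G : (M.prodUpd U).FrameEquiv (Model.prodUpd _ marked) := F₁.prodMCongr U.rel
    (fun f t p => sat (U.post f p) M t) (fun f t p => sat (marked.post f p) _ t) hpre
  refine ⟨G, fun e x => ?_, fun e p x => ?_, fun p hp x => ?_⟩ <;>
    refine (prodUpd_singleAssign_V _ _ (F₁ x.1.1) x.1.2 ((hpre _ _).mp x.2)).trans ?_
  · by_cases he : x.1.2 = e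
    · rw [if_pos (by rw [he])]
      exact iff_of_true trivial he
    · rw [if_neg fun h => he (congrArg Sigma.fst (hcode h)).symm]
      simpa [he, stored, sat] using hstored ⟨e, none⟩ (hmem _) x.1.1
  · have hne : code ⟨e, some p⟩ ≠ code ⟨x.1.2, none⟩ := fun h => by
      obtain ⟨rfl, hp⟩ := Sigma.mk.inj_iff.mp (hcode h)
      cases hp
    rw [if_neg hne]
    exact hstored ⟨e, some p⟩ (hmem _) x.1.1
  · rw [if_neg (show p ≠ code ⟨x.1.2, none⟩ from fun h => hp (h ▸ hcodeQ _))]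
    exact hkeptQ p hp x.1.1

theorem exists_frameEquiv_singleAssigns (M : Model A P) {U : Upd A P} (hU : U.WF) (Q : Set P)
    (hQfresh : ∀ q ∈ Q, ¬ U.occursAtom q) (code : U.Slot → P) (hcode : Function.Injective code)
    (hcodeQ : ∀ i, code i ∈ Q) :
    ∃ l : List (Upd A P), (∀ Ui ∈ l, Ui.WF ∧ Ui.AssignsAtMostOne) ∧
      ∃ F : (M.prodUpd U).FrameEquiv (prodUpds M l),
        ∀ p ∉ Q, ∀ x, (M.prodUpd U).V p x ↔ (prodUpds M l).V p (F x) := by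
  classical
  obtain ⟨l, hl, F, hmarker, hstored, hkept⟩ :=
    exists_frameEquiv_marked M hU Q hQfresh code hcode hcodeQ
  let q : U.E → P → P := fun e p => if h : p ∈ U.dom e then code ⟨e, some ⟨p, h⟩⟩ else p
  obtain ⟨pairs, hpairs⟩ := hU.exists_list_mem_iff_mem_dom
  obtain ⟨G, hG⟩ := exists_frameEquiv_condCopies Q (fun e => code ⟨e, none⟩) q
    (fun e => hcodeQ _) pairs _ (fun s => (F.toEquiv.symm s).1.2)
    (fun e s => by simpa using hmarker e (F.toEquiv.symm s))
    fun c hc => by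
      have hc := (hpairs c).mp hc
      exact ⟨by simpa [q, hc] using hcodeQ ⟨c.1, some ⟨c.2, hc⟩⟩,
        fun hQ => hQfresh _ hQ (.inr (.inr ⟨c.1, hc⟩))⟩
  refine ⟨l ++ pairs.map fun c => condCopy (code ⟨c.1, none⟩) (q c.1 c.2) c.2,
    fun Ui hUi => ?_, ?_⟩
  · rcases List.mem_append.mp hUi with hUi | hUi
    · exact hl Ui hUi
    · obtain ⟨c, -, rfl⟩ := List.mem_map.mp hUi
      exact ⟨publicAssign_WF _ (.ite trivial trivial trivial), Upd.assignsAtMostOne_singleAssign⟩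
  rw [prodUpds_append]
  refine ⟨F.trans G, fun p hp x => ?_⟩
  change sat (U.post x.1.2 p) M x.1.1 ↔ _
  rw [Model.FrameEquiv.trans_apply, hG]
  simp only [Equiv.symm_apply_apply, hpairs]
  split_ifs with hdomp
  · simpa [q, hdomp] using (hstored _ ⟨p, hdomp⟩ x).symm
  · rw [hkept p hp x, show U.post x.1.2 p = .atom p from not_not.mp hdomp]
    rfl

theorem single_assignments_suffice_general {A P : Type}
    (M : Model A P)
    (U : Upd A P) [Fintype U.E] (hU : U.WF)
    (hdom : Nonempty (M.prodUpd U).S)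
    (Q : Set P) (hQfresh : ∀ q ∈ Q, ¬ U.occursAtom q)
    (hQcard : Q.ncard = ∑ e : U.E, ({p | U.post e p ≠ Form.atom p}.ncard + 1)) :
    ∃ l : List (Upd A P),
      (∀ Ui ∈ l, Ui.WF ∧ ∀ g : Ui.E, {p | Ui.post g p ≠ Form.atom p}.Subsingleton) ∧
      Nonempty (prodUpds M l).S ∧
      ∃ h : (M.prodUpd U).S → (prodUpds M l).S,
        Function.Bijective h ∧
        (∀ a x y, (M.prodUpd U).R a x y ↔ (prodUpds M l).R a (h x) (h y)) ∧
        (∀ p, p ∉ Q → ∀ x, ((M.prodUpd U).V p x ↔ (prodUpds M l).V p (h x))) := by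
  have := hU.finite_slot
  have : Nonempty U.Slot := ⟨⟨hU.1.some, none⟩⟩
  obtain ⟨code, hcode, hcodeQ⟩ := exists_injective_mem_of_card_eq (hU.card_slot.trans hQcard.symm)
  obtain ⟨l, hl, F, hV⟩ := exists_frameEquiv_singleAssigns M hU Q hQfresh code hcode hcodeQ
  exact ⟨l, hl, ⟨F hdom.some⟩, F, F.bijective, F.rel_iff, hV⟩

/-- given an update model `U`, an epistemic model `M` with `M ⊗ U`
nonempty, and a set `Q` of atoms not occurring in `U`, of cardinality
`Σ_{e ∈ E} (|dom(post(e))| + 1)`, there is a finite sequence `U₁, …, U_m` of update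
models, each of whose events assigns at most one atom, such that the iterated
product `N = (…(M ⊗ U₁) ⊗ …) ⊗ U_m` has nonempty domain and there is a bijection
from the domain of `M ⊗ U` onto the domain of `N` preserving and reflecting each
accessibility relation and the valuation of every atom `p ∈ P \ Q`. -/
theorem single_assignments_suffice {A P : Type} [Finite A] [Countable P]
    (M : Model A P) (hMne : Nonempty M.S)
    (U : Upd A P) [Fintype U.E] (hU : U.WF)
    (hdom : Nonempty (M.prodUpd U).S)
    (Q : Set P) (hQfresh : ∀ q ∈ Q, ¬ U.occursAtom q)
    (hQcard : Q.ncard = ∑ e : U.E, ({p | U.post e p ≠ Form.atom p}.ncard + 1)) :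
    ∃ l : List (Upd A P),
      (∀ Ui ∈ l, Ui.WF ∧ ∀ g : Ui.E, {p | Ui.post g p ≠ Form.atom p}.Subsingleton) ∧
      Nonempty (prodUpds M l).S ∧
      ∃ h : (M.prodUpd U).S → (prodUpds M l).S,
        Function.Bijective h ∧
        (∀ a x y, (M.prodUpd U).R a x y ↔ (prodUpds M l).R a (h x) (h y)) ∧
        (∀ p, p ∉ Q → ∀ x, ((M.prodUpd U).V p x ↔ (prodUpds M l).V p (h x))) :=
  single_assignments_suffice_general M U hU hdom Q hQfresh hQcard
end

section
/- Let p ∈ P and let M be the epistemic model with states S = {1, 0}, R(a) = S × S for every agent a ∈ A, V(p) = {1}, and V(q) = ∅ for every atom q ≠ p. Then there is no finite sequence (U₁,e₁), …, (U_n,e_n) of updates, each of which is a public announcement (a single event with universal access, arbitrary precondition and identity postcondition) or a public assignment whose postconditions on their domain are all ⊤ or ⊥ (a single event with universal access and precondition ⊤), such that the sequential execution at (M,1) is defined (at each step the precondition holds at the current point) and the resulting epistemic state is bisimilar to (M,0). -/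
/-- Sequential execution of a list of updates in a pointed epistemic model: at each
step the precondition of the actual event must hold at the current point. -/
inductive Exec {A P : Type} :
    ((N : Model A P) × N.S) → List ((U : Upd A P) × U.E) → ((N : Model A P) × N.S) → Prop where
  | nil (x : (N : Model A P) × N.S) : Exec x [] x
  | cons (N : Model A P) (s : N.S) (U : Upd A P) (e : U.E)
      (rest : List ((U : Upd A P) × U.E)) (y : (N : Model A P) × N.S)
      (h : sat (U.pre e) N s)
      (hrec : Exec ⟨N.prodUpd U, ⟨(s, e), h⟩⟩ rest y) :
      Exec ⟨N, s⟩ (⟨U, e⟩ :: rest) y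

/-- `(U,e)` is a public announcement: a single event with universal access,
arbitrary precondition and identity postcondition. -/
def IsPublicAnnouncement {A P : Type} (U : Upd A P) (e : U.E) : Prop :=
  (∀ f : U.E, f = e) ∧ (∀ a, U.rel a e e) ∧ (∀ q, U.post e q = Form.atom q)

/-- `(U,e)` is a public assignment with postconditions `⊤`/`⊥` only: a single event
with universal access and precondition `⊤`, whose postconditions on their domain
are all `⊤` or `⊥`. -/
def IsTFPublicAssignment {A P : Type} (U : Upd A P) (e : U.E) : Prop :=
  (∀ f : U.E, f = e) ∧ (∀ a, U.rel a e e) ∧ U.pre e = Form.top ∧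
  (∀ q, U.post e q = Form.atom q ∨ U.post e q = Form.top ∨ U.post e q = Form.bot)

/-! The atom `p` true at the point or nowhere is invariant under the allowed updates: a
public announcement only deletes states, and an assignment of `⊤` or `⊥` to `p` makes `p`
true everywhere or nowhere. No pointed model bisimilar to `(M,0)` satisfies it, since `p` is
false at `0` and true at the state `1` accessible from it. -/

def AtomAtPointOrNowhere {A P : Type} (p : P) (x : (N : Model A P) × N.S) : Prop :=
  x.1.V p x.2 ∨ ∀ t, ¬ x.1.V p t

def PreservesAtomAtPointOrNowhere {A P : Type} (p : P) (U : Upd A P) (e : U.E) : Prop :=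
  (∀ f : U.E, f = e) ∧
    (U.post e p = Form.atom p ∨ U.post e p = Form.top ∨ U.post e p = Form.bot)

lemma IsPublicAnnouncement.preservesAtomAtPointOrNowhere {A P : Type} {U : Upd A P}
    {e : U.E} (h : IsPublicAnnouncement U e) (p : P) : PreservesAtomAtPointOrNowhere p U e :=
  ⟨h.1, Or.inl (h.2.2 p)⟩

lemma IsTFPublicAssignment.preservesAtomAtPointOrNowhere {A P : Type} {U : Upd A P}
    {e : U.E} (h : IsTFPublicAssignment U e) (p : P) : PreservesAtomAtPointOrNowhere p U e :=
  ⟨h.1, h.2.2.2 p⟩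

lemma AtomAtPointOrNowhere.prodUpd {A P : Type} {p : P} {N : Model A P} {s : N.S}
    {U : Upd A P} {e : U.E} (hU : PreservesAtomAtPointOrNowhere p U e)
    (hs : AtomAtPointOrNowhere p ⟨N, s⟩) (h : sat (U.pre e) N s) :
    AtomAtPointOrNowhere p ⟨N.prodUpd U, ⟨(s, e), h⟩⟩ := by
  obtain ⟨hall, hpost | hpost | hpost⟩ := hU
  · rcases hs with hps | hnone
    · left
      show sat (U.post e p) N s
      rwa [hpost]
    · right
      rintro ⟨⟨t, f⟩, _⟩
      show ¬ sat (U.post f p) N t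
      rw [hall f, hpost]
      exact hnone t
  · left
    show sat (U.post e p) N s
    rw [hpost]
    trivial
  · right
    rintro ⟨⟨t, f⟩, _⟩
    show ¬ sat (U.post f p) N t
    rw [hall f, hpost]
    exact id

lemma Exec.atomAtPointOrNowhere {A P : Type} {p : P} {l : List ((U : Upd A P) × U.E)}
    {x y : (N : Model A P) × N.S} (hex : Exec x l y)
    (hl : ∀ u ∈ l, PreservesAtomAtPointOrNowhere p u.1 u.2) (hx : AtomAtPointOrNowhere p x) :
    AtomAtPointOrNowhere p y := by
  induction hex with
  | nil => exact hx
  | cons N s U e rest y h _ ih =>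
    exact ih (fun u hu => hl u (List.mem_cons_of_mem _ hu))
      (hx.prodUpd (hl ⟨U, e⟩ List.mem_cons_self) h)

lemma Bisimilar.atom_iff {A P : Type} {M M' : Model A P} {s : M.S} {s' : M'.S}
    (h : Bisimilar M M' s s') (p : P) : M.V p s ↔ M'.V p s' :=
  let ⟨_, hZ, hss'⟩ := h
  (hZ.2 s s' hss').1 p

lemma Bisimilar.exists_succ {A P : Type} {M M' : Model A P} {s : M.S} {s' : M'.S}
    (h : Bisimilar M M' s s') {a : A} {t' : M'.S} (ht' : M'.R a s' t') :
    ∃ t, M.R a s t ∧ Bisimilar M M' t t' :=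
  let ⟨Z, hZ, hss'⟩ := h
  let ⟨t, hst, htt'⟩ := (hZ.2 s s' hss').2.2 a t' ht'
  ⟨t, hst, Z, hZ, htt'⟩

theorem no_tf_public_transformation_general {A P : Type} [Nonempty A]
    (p : P) :
    ¬ ∃ (l : List ((U : Upd A P) × U.E)) (y : (N : Model A P) × N.S),
        (∀ u ∈ l, u.1.WF ∧ (IsPublicAnnouncement u.1 u.2 ∨ IsTFPublicAssignment u.1 u.2)) ∧
        Exec ⟨⟨Bool, fun _ _ _ => True, fun q s => q = p ∧ s = true⟩, true⟩ l y ∧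
        Bisimilar y.1 ⟨Bool, fun _ _ _ => True, fun q s => q = p ∧ s = true⟩ y.2 false := by
  rintro ⟨l, y, hl, hex, hbisim⟩
  have hinv : AtomAtPointOrNowhere p y := by
    refine hex.atomAtPointOrNowhere (fun u hu => ?_) (Or.inl ⟨rfl, rfl⟩)
    rcases (hl u hu).2 with hpa | htf
    · exact hpa.preservesAtomAtPointOrNowhere p
    · exact htf.preservesAtomAtPointOrNowhere p
  have hpoint : ¬ y.1.V p y.2 := fun hp => Bool.false_ne_true ((hbisim.atom_iff p).mp hp).2
  obtain ⟨t, -, ht⟩ := hbisim.exists_succ (a := Classical.arbitrary A) (t' := true) trivial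
  exact hinv.resolve_left hpoint t ((ht.atom_iff p).mpr ⟨rfl, rfl⟩)

/-- with `M` the two-state model where both agents are uncertain about
`p` (states `1 = true` and `0 = false`, universal access, `V(p) = {1}`, all other
atoms false everywhere), there is no finite sequence of public announcements and
public assignments-to-`⊤`/`⊥` whose sequential execution at `(M,1)` is defined and
results in an epistemic state bisimilar to `(M,0)`. -/
theorem no_tf_public_transformation {A P : Type} [Finite A] [Nonempty A] [Countable P]
    (p : P) :
    ¬ ∃ (l : List ((U : Upd A P) × U.E)) (y : (N : Model A P) × N.S),
        (∀ u ∈ l, u.1.WF ∧ (IsPublicAnnouncement u.1 u.2 ∨ IsTFPublicAssignment u.1 u.2)) ∧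
        Exec ⟨⟨Bool, fun _ _ _ => True, fun q s => q = p ∧ s = true⟩, true⟩ l y ∧
        Bisimilar y.1 ⟨Bool, fun _ _ _ => True, fun q s => q = p ∧ s = true⟩ y.2 false :=
  no_tf_public_transformation_general p
end

section
/- Bisimilar epistemic states cannot be distinguished in the language L: if (M,s) ↔ (M',s'), then for every formula φ ∈ L (including formulas containing common-knowledge modalities [B*] and update modalities [U,e]): (M,s) ⊨ φ if and only if (M',s') ⊨ φ. -/
/-! Formulas are preserved along any relation satisfying the atoms, forth and back clauses,
proved by induction on the formula for all models at once. The only case needing care is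
`[U,e]φ`: there the induction hypothesis for the pre- and postconditions makes
`Z × (=)` such a relation between the two product updates, to which the induction hypothesis
for `φ` applies. Common knowledge follows because forth and back lift to the
reflexive-transitive closure of a union of accessibility relations. -/

/-- The clauses of `Bisim` without its nonemptiness requirement, which is not stable under
product update. -/
def IsZigzag {A P : Type} (M M' : Model A P) (Z : M.S → M'.S → Prop) : Prop :=
  ∀ s s', Z s s' →
    (∀ p, M.V p s ↔ M'.V p s') ∧
    (∀ a t, M.R a s t → ∃ t', M'.R a s' t' ∧ Z t t') ∧
    (∀ a t', M'.R a s' t' → ∃ t, M.R a s t ∧ Z t t')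

theorem Relation.ReflTransGen.exists_of_forth {α β : Type*} {R : α → α → Prop}
    {R' : β → β → Prop} {Z : α → β → Prop}
    (forth : ∀ x y, Z x y → ∀ t, R x t → ∃ t', R' y t' ∧ Z t t')
    {x t : α} {y : β} (hxy : Z x y) (ht : Relation.ReflTransGen R x t) :
    ∃ t', Relation.ReflTransGen R' y t' ∧ Z t t' := by
  induction ht with
  | refl => exact ⟨y, .refl, hxy⟩
  | tail _ hstep ih =>
    obtain ⟨u', hu', hZu⟩ := ih
    obtain ⟨t', ht', hZt⟩ := forth _ _ hZu _ hstep
    exact ⟨t', hu'.tail ht', hZt⟩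

namespace IsZigzag

variable {A P : Type} {M M' : Model A P} {Z : M.S → M'.S → Prop}

theorem symm (hZ : IsZigzag M M' Z) : IsZigzag M' M (Function.swap Z) := by
  intro s' s hs
  obtain ⟨atoms, forth, back⟩ := hZ s s' hs
  exact ⟨fun p => (atoms p).symm, back, forth⟩

theorem forth_reflTransGen (hZ : IsZigzag M M' Z) (B : Set A) {s t : M.S} {s' : M'.S}
    (hs : Z s s') (ht : Relation.ReflTransGen (fun x y => ∃ a ∈ B, M.R a x y) s t) :
    ∃ t', Relation.ReflTransGen (fun x y => ∃ a ∈ B, M'.R a x y) s' t' ∧ Z t t' := by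
  refine Relation.ReflTransGen.exists_of_forth ?_ hs ht
  rintro x x' hx y ⟨a, ha, hxy⟩
  obtain ⟨y', hxy', hy⟩ := (hZ x x' hx).2.1 a y hxy
  exact ⟨y', ⟨a, ha, hxy'⟩, hy⟩

theorem prodM (hZ : IsZigzag M M' Z) (E : Type) (rel : A → E → E → Prop)
    {preS : E → M.S → Prop} {preS' : E → M'.S → Prop}
    {postS : E → M.S → P → Prop} {postS' : E → M'.S → P → Prop}
    (hpre : ∀ f s s', Z s s' → (preS f s ↔ preS' f s'))
    (hpost : ∀ f s s' p, Z s s' → (postS f s p ↔ postS' f s' p)) :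
    IsZigzag (prodM M E rel preS postS) (prodM M' E rel preS' postS')
      (fun x x' => Z x.1.1 x'.1.1 ∧ x.1.2 = x'.1.2) := by
  rintro ⟨⟨s, f⟩, _⟩ ⟨⟨s', _⟩, _⟩ ⟨hs, rfl⟩
  obtain ⟨-, forth, back⟩ := hZ s s' hs
  refine ⟨fun p => hpost f s s' p hs, ?_, ?_⟩
  · rintro a ⟨⟨t, g⟩, ht⟩ ⟨hst, hfg⟩
    obtain ⟨t', hst', htt'⟩ := forth a t hst
    exact ⟨⟨(t', g), (hpre g t t' htt').mp ht⟩, ⟨hst', hfg⟩, htt', rfl⟩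
  · rintro a ⟨⟨t', g⟩, ht'⟩ ⟨hst', hfg⟩
    obtain ⟨t, hst, htt'⟩ := back a t' hst'
    exact ⟨⟨(t, g), (hpre g t t' htt').mpr ht'⟩, ⟨hst, hfg⟩, htt', rfl⟩

theorem sat_iff (φ : Form A P) (hZ : IsZigzag M M' Z) {s : M.S} {s' : M'.S} (hs : Z s s') :
    sat φ M s ↔ sat φ M' s' := by
  induction φ generalizing M M' with
  | atom p => exact (hZ s s' hs).1 p
  | top => exact Iff.rfl
  | bot => exact Iff.rfl
  | neg φ ih => exact not_congr (ih hZ hs)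
  | and φ ψ ihφ ihψ => exact and_congr (ihφ hZ hs) (ihψ hZ hs)
  | box a φ ih =>
    obtain ⟨-, forth, back⟩ := hZ s s' hs
    refine ⟨fun h t' ht' => ?_, fun h t ht => ?_⟩
    · obtain ⟨t, ht, htt'⟩ := back a t' ht'
      exact (ih hZ htt').mp (h t ht)
    · obtain ⟨t', ht', htt'⟩ := forth a t ht
      exact (ih hZ htt').mpr (h t' ht')
  | cbox B φ ih =>
    refine ⟨fun h t' ht' => ?_, fun h t ht => ?_⟩
    · obtain ⟨t, ht, htt'⟩ := hZ.symm.forth_reflTransGen B hs ht'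
      exact (ih hZ htt').mp (h t ht)
    · obtain ⟨t', ht', htt'⟩ := hZ.forth_reflTransGen B hs ht
      exact (ih hZ htt').mpr (h t' ht')
  | upd E rel pre post e φ ihpre ihpost ihφ =>
    have hprod := hZ.prodM E rel (fun f _ _ => ihpre f hZ) (fun f _ _ p => ihpost f p hZ)
    have hpre : sat (pre e) M s ↔ sat (pre e) M' s' := ihpre e hZ hs
    refine ⟨fun h h' => ?_, fun h' h => ?_⟩
    · exact (ihφ hprod (s := ⟨(s, e), hpre.mpr h'⟩) ⟨hs, rfl⟩).mp (h _)
    · exact (ihφ hprod (s' := ⟨(s', e), hpre.mp h⟩) ⟨hs, rfl⟩).mpr (h' _)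

end IsZigzag

theorem bisimulation_invariance_general {A P : Type}
    (M M' : Model A P)
    (s : M.S) (s' : M'.S) (hbis : Bisimilar M M' s s')
    (φ : Form A P) :
    sat φ M s ↔ sat φ M' s' := by
  obtain ⟨Z, ⟨-, hZ⟩, hs⟩ := hbis
  exact IsZigzag.sat_iff φ hZ hs

/-- bisimilar epistemic states cannot be distinguished in the
language `L`: if `(M,s) ↔ (M',s')`, then for every formula `φ ∈ L` (including
formulas containing common-knowledge and update modalities):
`(M,s) ⊨ φ` if and only if `(M',s') ⊨ φ`. -/
theorem bisimulation_invariance {A P : Type} [Finite A] [Countable P]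
    (M M' : Model A P) (hMne : Nonempty M.S) (hM'ne : Nonempty M'.S)
    (s : M.S) (s' : M'.S) (hbis : Bisimilar M M' s s')
    (φ : Form A P) (hφ : φ.WF) :
    sat φ M s ↔ sat φ M' s' :=
  bisimulation_invariance_general M M' s s' hbis φ
end
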